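/- arXiv:2510.19323 — 2 statements merged into one kernel-verified Lean document; each statement's English description precedes it below -/
import Mathlib

section
/- Let H be a real Hilbert space, let κ > 0, and let α : H → ℝ be a continuous linear functional with operator norm ‖α‖ < √(2κ). Define F : H → ℝ by F(v) = √(2κ)·‖v‖ − α(v). Then F is strongly convex in the Finsler sense: for every v ∈ H with v ≠ 0 and every u ∈ H with u ≠ 0, the real function t ↦ ½·F(v + t·u)² is twice differentiable at t = 0 and its second derivative at t = 0 is strictly positive. -/
/-!
Along the line `s ↦ v + s • u` put `A s = c ‖v + s • u‖ - α (v + s • u)` with `c = √(2κ)`, so the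
function is `A² / 2` and its second derivative at `0` is `A'(0)² + A(0) A''(0)`. Here
`A(0) = c ‖v‖ - α v > 0` because `‖α‖ < c`, and `A''(0) = c (‖u‖²‖v‖² - ⟪v, u⟫²) / ‖v‖³ ≥ 0` by
Cauchy–Schwarz. If `A''(0) = 0`, then `u = r • v` with `r ≠ 0`, so `A'(0) = r A(0) ≠ 0`.
-/

open Filter Topology
open scoped RealInnerProductSpace

section NormAlongLine

variable {E : Type*} [NormedAddCommGroup E] [InnerProductSpace ℝ E]

theorem hasDerivAt_add_smul (v u : E) (t : ℝ) : HasDerivAt (fun s : ℝ => v + s • u) u t := by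
  simpa using ((hasDerivAt_id t).smul_const u).const_add v

theorem hasDerivAt_norm_add_smul {v u : E} {t : ℝ} (h : v + t • u ≠ 0) :
    HasDerivAt (fun s : ℝ => ‖v + s • u‖) (⟪v + t • u, u⟫ / ‖v + t • u‖) t := by
  have hsq := (hasDerivAt_add_smul v u t).norm_sq.sqrt (by positivity)
  simp only [Real.sqrt_sq (norm_nonneg _)] at hsq
  convert hsq using 1
  ring

theorem hasDerivAt_inner_div_norm_add_smul {v u : E} {t : ℝ} (h : v + t • u ≠ 0) :
    HasDerivAt (fun s : ℝ => ⟪v + s • u, u⟫ / ‖v + s • u‖)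
      ((‖u‖ ^ 2 * ‖v + t • u‖ ^ 2 - ⟪v + t • u, u⟫ ^ 2) / ‖v + t • u‖ ^ 3) t := by
  have hnum := (hasDerivAt_add_smul v u t).inner ℝ (hasDerivAt_const t u)
  have hquot := hnum.div (hasDerivAt_norm_add_smul h) (norm_ne_zero_iff.2 h)
  refine hquot.congr_deriv ?_
  have : ‖v + t • u‖ ≠ 0 := norm_ne_zero_iff.2 h
  rw [inner_zero_right, zero_add, real_inner_self_eq_norm_sq]
  field_simp

theorem sq_inner_le_norm_sq_mul_norm_sq (v u : E) : ⟪v, u⟫ ^ 2 ≤ ‖u‖ ^ 2 * ‖v‖ ^ 2 := by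
  rw [← sq_abs, mul_comm, ← mul_pow]
  exact pow_le_pow_left₀ (abs_nonneg _) (abs_real_inner_le_norm v u) 2

theorem randers_second_variation_pos {c : ℝ} (hc : 0 < c) (α : E →L[ℝ] ℝ) {v u : E}
    (hv : v ≠ 0) (hu : u ≠ 0) (hαv : α v < c * ‖v‖) :
    0 < (c * (⟪v, u⟫ / ‖v‖) - α u) ^ 2 +
      (c * ‖v‖ - α v) * (c * ((‖u‖ ^ 2 * ‖v‖ ^ 2 - ⟪v, u⟫ ^ 2) / ‖v‖ ^ 3)) := by
  have hv₀ : 0 < ‖v‖ := norm_pos_iff.2 hv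
  have hA : 0 < c * ‖v‖ - α v := sub_pos.2 hαv
  rcases (sub_nonneg.2 (sq_inner_le_norm_sq_mul_norm_sq v u)).lt_or_eq with hlt | heq
  · positivity
  · -- equality in Cauchy–Schwarz: `u = r • v`, and then the first term is `(r (c‖v‖ - α v))²`
    have hnorm : ‖⟪v, u⟫‖ = ‖v‖ * ‖u‖ := by
      rw [Real.norm_eq_abs, ← sq_eq_sq₀ (abs_nonneg _) (by positivity), sq_abs]
      linarith
    obtain ⟨r, hr, rfl⟩ := (norm_inner_eq_norm_iff hv hu).1 hnorm
    rw [← heq, real_inner_smul_right, real_inner_self_eq_norm_sq, map_smul, smul_eq_mul]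
    have : c * (r * ‖v‖ ^ 2 / ‖v‖) - r * α v = r * (c * ‖v‖ - α v) := by
      field_simp
    rw [this, zero_div, mul_zero, mul_zero, add_zero]
    positivity

end NormAlongLine

theorem eventually_hasDerivAt_half_sq {f f' : ℝ → ℝ} {x : ℝ}
    (hf : ∀ᶠ t in 𝓝 x, HasDerivAt f (f' t) t) :
    ∀ᶠ t in 𝓝 x, HasDerivAt (fun s => 1 / 2 * f s ^ 2) (f t * f' t) t := by
  filter_upwards [hf] with t ht
  refine ((ht.pow 2).const_mul (1 / 2 : ℝ)).congr_deriv ?_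
  ring

theorem stmt_2_general {H : Type*} [NormedAddCommGroup H] [InnerProductSpace ℝ H]
    (κ : ℝ) (hκ : 0 < κ) (α : H →L[ℝ] ℝ) (hα : ‖α‖ < Real.sqrt (2 * κ))
    (F : H → ℝ) (hF : ∀ v, F v = Real.sqrt (2 * κ) * ‖v‖ - α v)
    (v u : H) (hv : v ≠ 0) (hu : u ≠ 0) :
    ∃ f' : ℝ → ℝ,
      (∀ᶠ t in nhds (0 : ℝ),
        HasDerivAt (fun s : ℝ => (1 / 2) * (F (v + s • u)) ^ 2) (f' t) t) ∧
      ∃ c : ℝ, HasDerivAt f' c 0 ∧ 0 < c := by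
  set c := Real.sqrt (2 * κ)
  have hc : 0 < c := Real.sqrt_pos.2 (by linarith)
  have hαv : α v < c * ‖v‖ :=
    ((le_abs_self _).trans (α.le_opNorm v)).trans_lt
      (mul_lt_mul_of_pos_right hα (norm_pos_iff.2 hv))
  set dF : ℝ → ℝ := fun t => c * (⟪v + t • u, u⟫ / ‖v + t • u‖) - α u
  have hline_ne : ∀ᶠ t in 𝓝 (0 : ℝ), v + t • u ≠ 0 :=
    (hasDerivAt_add_smul v u 0).continuousAt.eventually_ne (by simpa using hv)
  have hdF : ∀ᶠ t in 𝓝 (0 : ℝ), HasDerivAt (fun s => F (v + s • u)) (dF t) t := by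
    filter_upwards [hline_ne] with t ht
    simp only [hF]
    exact ((hasDerivAt_norm_add_smul ht).const_mul c).sub
      (α.hasFDerivAt.comp_hasDerivAt t (hasDerivAt_add_smul v u t))
  have hdF' : HasDerivAt dF (c * ((‖u‖ ^ 2 * ‖v‖ ^ 2 - ⟪v, u⟫ ^ 2) / ‖v‖ ^ 3)) 0 := by
    have h := ((hasDerivAt_inner_div_norm_add_smul hline_ne.self_of_nhds).const_mul c).sub_const
      (α u)
    rwa [zero_smul, add_zero] at h
  refine ⟨fun t => F (v + t • u) * dF t, eventually_hasDerivAt_half_sq hdF, _,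
    hdF.self_of_nhds.mul hdF', ?_⟩
  simpa [hF, dF, sq] using randers_second_variation_pos hc α hv hu hαv

/-- strong convexity of the Randers-type Finsler norm
`F v = √(2κ)‖v‖ − α v` with `‖α‖ < √(2κ)`: for `v ≠ 0`, `u ≠ 0` the map
`t ↦ ½ F(v + t u)²` is twice differentiable at `0` with strictly positive
second derivative there. -/
theorem stmt_2 {H : Type*} [NormedAddCommGroup H] [InnerProductSpace ℝ H] [CompleteSpace H]
    (κ : ℝ) (hκ : 0 < κ) (α : H →L[ℝ] ℝ) (hα : ‖α‖ < Real.sqrt (2 * κ))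
    (F : H → ℝ) (hF : ∀ v, F v = Real.sqrt (2 * κ) * ‖v‖ - α v)
    (v u : H) (hv : v ≠ 0) (hu : u ≠ 0) :
    ∃ f' : ℝ → ℝ,
      (∀ᶠ t in nhds (0 : ℝ),
        HasDerivAt (fun s : ℝ => (1 / 2) * (F (v + s • u)) ^ 2) (f' t) t) ∧
      ∃ c : ℝ, HasDerivAt f' c 0 ∧ 0 < c :=
  stmt_2_general κ hκ α hα F hF v u hv hu
end

section
/- Let H be a real Hilbert space, let α : H → H* be a continuously differentiable (C¹) map into the topological dual of H, let T > 0, and let γ : ℝ → H be a twice continuously differentiable curve. For a twice continuously differentiable variation η : ℝ → H with η(0) = 0 and η(T) = 0, let A_η(s) = ∫₀ᵀ ( ½‖γ'(t) + s·η'(t)‖² − α(γ(t) + s·η(t))(γ'(t) + s·η'(t)) ) dt. Then the following are equivalent: (i) for every such η, A_η'(0) = 0 (γ is a critical point of the magnetic action with fixed endpoints); (ii) for every t ∈ [0, T] and every w ∈ H, ⟨γ''(t), w⟩ = (Dα(γ(t))[γ'(t)])(w) − (Dα(γ(t))[w])(γ'(t)) (γ satisfies the magnetic geodesic equation γ'' =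 Y_γ γ', where Y is the Lorentz force of the exact magnetic form dα). -/
/-!
The first variation of the magnetic action along `γ + s • η` is, after integrating
`⟪γ', η'⟫ - α(γ) η'` by parts, `∫ (dα(γ)(γ', η) - ⟪γ'', η⟫) dt`; the boundary term vanishes because
`η` vanishes at both endpoints. Choosing `η = φ • w` with `φ` a test function supported in `(0, T)`,
the fundamental lemma of the calculus of variations turns the vanishing of the first variation into
the pointwise equation `⟪γ'', w⟫ = dα(γ)(γ', w)`.
-/

open MeasureTheory Set
open scoped ContDiff InnerProductSpace

theorem hasDerivAt_intervalIntegral_of_continuous_deriv {E : Type*} [NormedAddCommGroup E]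
    [NormedSpace ℝ E] {F F' : ℝ → ℝ → E} {a b s₀ : ℝ} (hF : ∀ s, Continuous (F s))
    (hF' : Continuous (Function.uncurry F'))
    (hderiv : ∀ s t, HasDerivAt (fun s => F s t) (F' s t) s) :
    HasDerivAt (fun s => ∫ t in a..b, F s t) (∫ t in a..b, F' s₀ t) s₀ := by
  obtain ⟨C, hC⟩ := ((isCompact_closedBall s₀ 1).prod isCompact_uIcc).exists_bound_of_continuousOn
    hF'.continuousOn
  refine (intervalIntegral.hasDerivAt_integral_of_dominated_loc_of_deriv_le (bound := fun _ => C)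
    (Metric.closedBall_mem_nhds s₀ one_pos) (.of_forall fun s => (hF s).aestronglyMeasurable)
    ((hF s₀).intervalIntegrable a b)
    (hF'.comp (Continuous.prodMk_right s₀)).aestronglyMeasurable
    (.of_forall fun t ht s hs => hC (s, t) ⟨hs, uIoc_subset_uIcc ht⟩)
    intervalIntegrable_const (.of_forall fun t _ s _ => hderiv s t)).2

theorem eqOn_zero_of_forall_intervalIntegral_mul_eq_zero {g : ℝ → ℝ} {a b : ℝ} (hab : a < b)
    (hg : ContinuousOn g (Icc a b))
    (h : ∀ φ : ℝ → ℝ, ContDiff ℝ ∞ φ → HasCompactSupport φ → tsupport φ ⊆ Ioo a b →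
      ∫ t in a..b, φ t * g t = 0) :
    EqOn g 0 (Icc a b) := by
  have hg' : ContinuousOn g (Ioo a b) := hg.mono Ioo_subset_Icc_self
  have hae : ∀ᵐ t, t ∈ Ioo a b → g t = 0 := by
    refine isOpen_Ioo.ae_eq_zero_of_integral_contDiff_smul_eq_zero
      (hg'.locallyIntegrableOn measurableSet_Ioo) fun φ hφ hφc hφU => ?_
    have hvanish : ∀ t ∉ Ioc a b, φ t • g t = 0 := fun t ht => by
      rw [image_eq_zero_of_notMem_tsupport fun h => ht (Ioo_subset_Ioc_self (hφU h)), zero_smul]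
    rw [← setIntegral_eq_integral_of_forall_compl_eq_zero hvanish,
      ← intervalIntegral.integral_of_le hab.le]
    exact h φ hφ hφc hφU
  have hIoo : EqOn g 0 (Ioo a b) :=
    Measure.eqOn_open_of_ae_eq ((ae_restrict_iff' measurableSet_Ioo).2 hae) isOpen_Ioo hg'
      continuousOn_const
  exact hIoo.of_subset_closure hg continuousOn_const Ioo_subset_Icc_self
    (closure_Ioo hab.ne).superset

noncomputable section

variable {H : Type*} [NormedAddCommGroup H] [InnerProductSpace ℝ H]

def magneticLagrangian (α : H → H →L[ℝ] ℝ) (x v : H) : ℝ :=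
  1 / 2 * ‖v‖ ^ 2 - α x v

def extDerivOneForm (α : H → H →L[ℝ] ℝ) (x u w : H) : ℝ :=
  fderiv ℝ α x u w - fderiv ℝ α x w u

def magneticEulerLagrange (α : H → H →L[ℝ] ℝ) (γ : ℝ → H) (t : ℝ) (w : H) : ℝ :=
  extDerivOneForm α (γ t) (deriv γ t) w - ⟪deriv (deriv γ) t, w⟫_ℝ

theorem HasDerivAt.magneticLagrangian {α : H → H →L[ℝ] ℝ} {p q : ℝ → H} {p' q' : H} {s : ℝ}
    (hα : DifferentiableAt ℝ α (p s)) (hp : HasDerivAt p p' s) (hq : HasDerivAt q q' s) :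
    HasDerivAt (fun s => magneticLagrangian α (p s) (q s))
      (⟪q s, q'⟫_ℝ - fderiv ℝ α (p s) p' (q s) - α (p s) q') s := by
  refine ((hq.norm_sq.const_mul (1 / 2 : ℝ)).sub
    ((hα.hasFDerivAt.comp_hasDerivAt s hp).clm_apply hq)).congr_deriv ?_
  simp only [Function.comp_apply]
  ring

theorem magneticEulerLagrange_smul (α : H → H →L[ℝ] ℝ) (γ : ℝ → H) (t c : ℝ) (w : H) :
    magneticEulerLagrange α γ t (c • w) = c * magneticEulerLagrange α γ t w := by
  simp only [magneticEulerLagrange, extDerivOneForm, map_smul, smul_apply,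
    inner_smul_right, smul_eq_mul]
  ring

theorem continuous_magneticEulerLagrange {α : H → H →L[ℝ] ℝ} (hα : ContDiff ℝ 1 α) {γ : ℝ → H}
    (hγ : ContDiff ℝ 2 γ) {w : ℝ → H} (hw : Continuous w) :
    Continuous fun t => magneticEulerLagrange α γ t (w t) := by
  have hα' : Continuous (fderiv ℝ α) := hα.continuous_fderiv one_ne_zero
  have hγ' : ContDiff ℝ 1 (deriv γ) := hγ.deriv'
  have hγ'' : Continuous (deriv (deriv γ)) := hγ'.continuous_deriv_one
  unfold magneticEulerLagrange extDerivOneForm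
  fun_prop

theorem integral_deriv_momentum_pairing_eq_zero {α : H → H →L[ℝ] ℝ} (hα : ContDiff ℝ 1 α)
    {γ η : ℝ → H} (hγ : ContDiff ℝ 2 γ) (hη : ContDiff ℝ 1 η) {a b : ℝ} (ha : η a = 0)
    (hb : η b = 0) :
    ∫ t in a..b, (⟪deriv γ t, deriv η t⟫_ℝ + ⟪deriv (deriv γ) t, η t⟫_ℝ
      - (fderiv ℝ α (γ t) (deriv γ t) (η t) + α (γ t) (deriv η t))) = 0 := by
  have hα' : Continuous (fderiv ℝ α) := hα.continuous_fderiv one_ne_zero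
  have hγ' : ContDiff ℝ 1 (deriv γ) := hγ.deriv'
  have hγ'' : Continuous (deriv (deriv γ)) := hγ'.continuous_deriv_one
  have hη' : Continuous (deriv η) := hη.continuous_deriv_one
  have hderiv : ∀ t, HasDerivAt (fun t => ⟪deriv γ t, η t⟫_ℝ - α (γ t) (η t))
      (⟪deriv γ t, deriv η t⟫_ℝ + ⟪deriv (deriv γ) t, η t⟫_ℝ
        - (fderiv ℝ α (γ t) (deriv γ t) (η t) + α (γ t) (deriv η t))) t := fun t =>
    ((hγ'.differentiable one_ne_zero t).hasDerivAt.inner ℝ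
      (hη.differentiable one_ne_zero t).hasDerivAt).sub
      (((hα.differentiable one_ne_zero _).hasFDerivAt.comp_hasDerivAt t
        (hγ.differentiable two_ne_zero t).hasDerivAt).clm_apply
        (hη.differentiable one_ne_zero t).hasDerivAt)
  rw [intervalIntegral.integral_eq_sub_of_hasDerivAt (fun t _ => hderiv t)
    (Continuous.intervalIntegrable (by fun_prop) a b)]
  simp [ha, hb]

theorem hasDerivAt_magneticAction_variation {α : H → H →L[ℝ] ℝ} (hα : ContDiff ℝ 1 α)
    {γ η : ℝ → H} (hγ : ContDiff ℝ 2 γ) (hη : ContDiff ℝ 1 η) {a b : ℝ} (ha : η a = 0)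
    (hb : η b = 0) :
    HasDerivAt (fun s : ℝ => ∫ t in a..b,
        magneticLagrangian α (γ t + s • η t) (deriv γ t + s • deriv η t))
      (∫ t in a..b, magneticEulerLagrange α γ t (η t)) 0 := by
  have hα' : Continuous (fderiv ℝ α) := hα.continuous_fderiv one_ne_zero
  have hγ' : ContDiff ℝ 1 (deriv γ) := hγ.deriv'
  have hγ'' : Continuous (deriv (deriv γ)) := hγ'.continuous_deriv_one
  have hη' : Continuous (deriv η) := hη.continuous_deriv_one
  have hline : ∀ (x y : H) (s : ℝ), HasDerivAt (fun s : ℝ => x + s • y) y s := fun x y s => by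
    simpa using ((hasDerivAt_id s).smul_const y).const_add x
  have hvar := hasDerivAt_intervalIntegral_of_continuous_deriv (a := a) (b := b) (s₀ := 0)
    (F' := fun s t => ⟪deriv γ t + s • deriv η t, deriv η t⟫_ℝ
      - fderiv ℝ α (γ t + s • η t) (η t) (deriv γ t + s • deriv η t)
      - α (γ t + s • η t) (deriv η t))
    (fun s => by unfold magneticLagrangian; fun_prop) (by fun_prop)
    (fun s t => (hline _ _ s).magneticLagrangian (hα.differentiable one_ne_zero _) (hline _ _ s))
  refine hvar.congr_deriv ?_
  simp only [zero_smul, add_zero]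
  rw [eq_comm, ← add_zero (∫ t in a..b, magneticEulerLagrange α γ t (η t)),
    ← integral_deriv_momentum_pairing_eq_zero hα hγ hη ha hb,
    ← intervalIntegral.integral_add
      ((continuous_magneticEulerLagrange hα hγ hη.continuous).intervalIntegrable a b)
      (Continuous.intervalIntegrable (by fun_prop) a b)]
  refine intervalIntegral.integral_congr fun t _ => ?_
  simp only [magneticEulerLagrange, extDerivOneForm]
  ring

end

theorem stmt_16_general {H : Type*} [NormedAddCommGroup H] [InnerProductSpace ℝ H]
    (α : H → (H →L[ℝ] ℝ)) (hα : ContDiff ℝ 1 α)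
    (T : ℝ) (hT : 0 < T)
    (γ : ℝ → H) (hγ : ContDiff ℝ 2 γ) :
    ((∀ η : ℝ → H, ContDiff ℝ 2 η → η 0 = 0 → η T = 0 →
        HasDerivAt (fun s : ℝ => ∫ t in (0:ℝ)..T,
          ((1 / 2) * ‖deriv γ t + s • deriv η t‖ ^ 2 -
            α (γ t + s • η t) (deriv γ t + s • deriv η t))) 0 0)
      ↔
      (∀ t ∈ Set.Icc (0:ℝ) T, ∀ w : H,
        (inner ℝ (deriv (deriv γ) t) w : ℝ) =
          (fderiv ℝ α (γ t) (deriv γ t)) w - (fderiv ℝ α (γ t) w) (deriv γ t))) := by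
  have hvariation := fun η (hη : ContDiff ℝ 2 η) (hη0 : η 0 = 0) (hηT : η T = 0) =>
    hasDerivAt_magneticAction_variation hα hγ (hη.of_le one_le_two) hη0 hηT
  constructor
  · intro hcrit t ht w
    suffices EqOn (fun t => magneticEulerLagrange α γ t w) 0 (Icc 0 T) by
      exact (sub_eq_zero.mp (this ht)).symm
    refine eqOn_zero_of_forall_intervalIntegral_mul_eq_zero hT
      (continuous_magneticEulerLagrange hα hγ continuous_const).continuousOn fun φ hφ _ hφU => ?_
    have hvanish : ∀ t ∉ Ioo 0 T, φ t • w = 0 := fun t ht => by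
      rw [image_eq_zero_of_notMem_tsupport fun h => ht (hφU h), zero_smul]
    have hη : ContDiff ℝ 2 fun t => φ t • w :=
      (hφ.of_le (WithTop.coe_le_coe.2 le_top)).smul contDiff_const
    have hη0 := hvanish 0 (by simp)
    have hηT := hvanish T (by simp)
    calc ∫ t in 0..T, φ t * magneticEulerLagrange α γ t w
        = ∫ t in 0..T, magneticEulerLagrange α γ t (φ t • w) := by
          simp only [magneticEulerLagrange_smul]
      _ = 0 := (hvariation _ hη hη0 hηT).unique (hcrit _ hη hη0 hηT)
  · intro heq η hη hη0 hηT
    refine (hvariation η hη hη0 hηT).congr_deriv ?_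
    refine (intervalIntegral.integral_congr fun t ht => ?_).trans intervalIntegral.integral_zero
    rw [uIcc_of_le hT.le] at ht
    simp only [magneticEulerLagrange, extDerivOneForm, heq t ht, sub_self]

/-- a C² curve `γ` is a critical point of the magnetic action with fixed
endpoints (for all C² variations `η` vanishing at `0` and `T`) if and only if it
satisfies the magnetic geodesic equation
`⟪γ''(t), w⟫ = (Dα(γ(t))[γ'(t)])(w) − (Dα(γ(t))[w])(γ'(t))` on `[0, T]`. -/
theorem stmt_16 {H : Type*} [NormedAddCommGroup H] [InnerProductSpace ℝ H] [CompleteSpace H]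
    (α : H → (H →L[ℝ] ℝ)) (hα : ContDiff ℝ 1 α)
    (T : ℝ) (hT : 0 < T)
    (γ : ℝ → H) (hγ : ContDiff ℝ 2 γ) :
    ((∀ η : ℝ → H, ContDiff ℝ 2 η → η 0 = 0 → η T = 0 →
        HasDerivAt (fun s : ℝ => ∫ t in (0:ℝ)..T,
          ((1 / 2) * ‖deriv γ t + s • deriv η t‖ ^ 2 -
            α (γ t + s • η t) (deriv γ t + s • deriv η t))) 0 0)
      ↔
      (∀ t ∈ Set.Icc (0:ℝ) T, ∀ w : H,
        (inner ℝ (deriv (deriv γ) t) w : ℝ) =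
          (fderiv ℝ α (γ t) (deriv γ t)) w - (fderiv ℝ α (γ t) w) (deriv γ t))) :=
  stmt_16_general α hα T hT γ hγ
end
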